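/- Suppose C > 0 and a real-valued function h on a punctured neighborhood of 1 satisfies (1/3)·Re((w-1)³) - C|w-1|⁴ ≤ h(w) ≤ (1/3)·Re((w-1)³) + C|w-1|⁴. Then there is ε₀ > 0 such that for all 0 < ε < ε₀, every w = 1 + r·e^{iθ} with 0 < r < ε^{1/3}/2 and 11π/12 < θ < 13π/12 satisfies -ε < h(w) < 0. -/

import Mathlib

/-!
Write `w = 1 + z` with `z = r e^{iθ}`. Then `Re (z³) = r³ cos 3θ`, and on the sector
`|θ - π| < π/12` we have `cos 3θ ∈ [-1, -1/2]`. Hence the two-sided bound pins `h w` between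
`-r³/3 - C r⁴` and `-r³/6 + C r⁴`; once `C r < 1/6` this gives `-r³/2 < h w < 0`, and
`r < ε^{1/3}/2` makes `r³/2 < ε`.
-/

open Real

lemma Real.cos_three_mul_le_neg_half {θ : ℝ} (hθ : |θ - π| ≤ π / 9) :
    cos (3 * θ) ≤ -(1 / 2) := by
  have hshift : cos (3 * θ) = -cos (3 * (θ - π)) := by
    rw [show 3 * θ = (3 * (θ - π) + π) + 2 * π by ring, cos_add_two_pi, cos_add_pi]
  have hsmall : |3 * (θ - π)| ≤ π / 3 := by
    rw [abs_mul, abs_of_pos three_pos]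
    linarith
  have hcos : cos (π / 3) ≤ cos |3 * (θ - π)| :=
    cos_le_cos_of_nonneg_of_le_pi (abs_nonneg _) (by linarith [pi_pos]) hsmall
  rw [cos_pi_div_three, cos_abs] at hcos
  linarith

lemma Complex.norm_ofReal_mul_exp_mul_I (r θ : ℝ) :
    ‖(r : ℂ) * Complex.exp (θ * Complex.I)‖ = |r| := by
  rw [norm_mul, Complex.norm_real, Complex.norm_exp_ofReal_mul_I, mul_one, Real.norm_eq_abs]

lemma Complex.re_ofReal_mul_exp_mul_I_pow_three (r θ : ℝ) :
    (((r : ℂ) * Complex.exp (θ * Complex.I)) ^ 3).re = r ^ 3 * Real.cos (3 * θ) := by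
  have hpolar : ((r : ℂ) * Complex.exp (θ * Complex.I)) ^ 3
      = ((r ^ 3 : ℝ) : ℂ) * Complex.exp (((3 * θ : ℝ) : ℂ) * Complex.I) := by
    rw [mul_pow, ← Complex.exp_nat_mul]
    push_cast
    ring_nf
  rw [hpolar, Complex.re_ofReal_mul, Complex.exp_ofReal_mul_I_re]

lemma Real.rpow_one_div_three_pow_three {x : ℝ} (hx : 0 ≤ x) : (x ^ ((1 : ℝ) / 3)) ^ 3 = x := by
  simpa using Real.rpow_inv_natCast_pow (n := 3) hx three_ne_zero

lemma neg_half_cube_lt_and_lt_zero_of_cubic_bounds {C r c x : ℝ} (hr : 0 < r) (hCr : C * r < 1 / 6)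
    (hc_lo : -1 ≤ c) (hc_hi : c ≤ -(1 / 2))
    (hx_lo : 1 / 3 * (r ^ 3 * c) - C * r ^ 4 ≤ x) (hx_hi : x ≤ 1 / 3 * (r ^ 3 * c) + C * r ^ 4) :
    -(r ^ 3 / 2) < x ∧ x < 0 := by
  have hr3 : 0 < r ^ 3 := pow_pos hr 3
  have hquartic : C * r ^ 4 < r ^ 3 / 6 := by
    rw [show C * r ^ 4 = (C * r) * r ^ 3 by ring]
    nlinarith
  constructor <;> nlinarith

open Real in
/-- if h satisfies the two-sided bound
    (1/3)·Re((w-1)³) ± C|w-1|⁴ on a punctured neighborhood of 1, then for all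
    small ε, every sector point w = 1 + r·e^{iθ} satisfies -ε < h(w) < 0. -/
theorem stmt_11 (C : ℝ) (hC : C > 0) (U : Set ℂ) (hU : U ∈ nhds (1:ℂ))
    (h : ℂ → ℝ)
    (hbd : ∀ w ∈ U \ {1},
      (1/3) * (((w - 1)^3).re) - C * ‖w - 1‖^4 ≤ h w ∧
        h w ≤ (1/3) * (((w - 1)^3).re) + C * ‖w - 1‖^4) :
    ∃ ε₀ > (0:ℝ), ∀ ε : ℝ, 0 < ε → ε < ε₀ →
      ∀ r θ : ℝ, 0 < r → r < ε ^ ((1:ℝ)/3) / 2 →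
        11*π/12 < θ → θ < 13*π/12 →
        -ε < h (1 + r * Complex.exp (θ * Complex.I)) ∧
          h (1 + r * Complex.exp (θ * Complex.I)) < 0 := by
  obtain ⟨δ, hδ, hball⟩ := Metric.mem_nhds_iff.mp hU
  set m := min δ (1 / (6 * C))
  have hm : 0 < m := lt_min hδ (by positivity)
  refine ⟨m ^ 3, by positivity, fun ε hε hεm r θ hr hrε hθ₁ hθ₂ => ?_⟩
  set s := ε ^ ((1 : ℝ) / 3)
  have hs3 : s ^ 3 = ε := rpow_one_div_three_pow_three hε.le
  have hsm : s < m :=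
    (pow_lt_pow_iff_left₀ (by positivity) hm.le three_ne_zero).1 (hs3 ▸ hεm)
  have hrm : r < m := by linarith [rpow_nonneg hε.le ((1 : ℝ) / 3)]
  have hCr : C * r < 1 / 6 := by
    have : r < 1 / (6 * C) := hrm.trans_le (min_le_right _ _)
    rw [lt_div_iff₀ (by positivity)] at this
    linarith
  have hr3 : r ^ 3 < ε := hs3 ▸ pow_lt_pow_left₀ (by linarith) hr.le three_ne_zero
  set z : ℂ := r * Complex.exp (θ * Complex.I)
  have hz : ‖z‖ = r := by rw [Complex.norm_ofReal_mul_exp_mul_I, abs_of_pos hr]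
  have hmem : 1 + z ∈ U \ {1} := by
    refine ⟨hball ?_, ?_⟩
    · rw [Metric.mem_ball, Complex.dist_eq, add_sub_cancel_left, hz]
      exact hrm.trans_le (min_le_left _ _)
    · rw [Set.mem_singleton_iff, add_eq_left, ← norm_eq_zero, hz]
      exact hr.ne'
  obtain ⟨hlo, hhi⟩ := hbd (1 + z) hmem
  rw [add_sub_cancel_left, Complex.re_ofReal_mul_exp_mul_I_pow_three, hz] at hlo hhi
  have hcos := cos_three_mul_le_neg_half (θ := θ) (by rw [abs_le]; constructor <;> linarith [pi_pos])
  obtain ⟨hneg, hlt⟩ :=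
    neg_half_cube_lt_and_lt_zero_of_cubic_bounds hr hCr (neg_one_le_cos _) hcos hlo hhi
  exact ⟨by linarith, hlt⟩
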